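/- arXiv:2510.02082 — 3 statements merged into one kernel-verified Lean document; each statement's English description precedes it below -/
import Mathlib

section
/- For every real μ > 0, the series whose terms are 1/( (a² + μ²·b²)·(c² + μ²·d²)·((a+c)² + μ²·(b+d)²) ), summed over all quadruples (a,b,c,d) of nonnegative integers with a ≥ b, c ≥ d and a·d − b·c = 1, converges and its sum equals (1/(4μ²))·( 2·arctan(μ)/μ − 2/(1 + μ²) ). -/
/-!
Write a quadruple as the pair of vectors `u = (a, b)`, `v = (c, d)`. The pairs in `T` are exactly
the nodes of the Stern–Brocot tree grown from `((1, 0), (1, 1))` by `(u, v) ↦ (u, u + v)` and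
`(u, v) ↦ (u + v, v)`, each reached once. Let `Q(x, y) = x² + μ²y²` and `B` its polarization.
Unimodularity gives `Q(u) Q(v) = B(u, v)² + μ²`, and the two children of `(u, v)` have pairing
`B + Q(u)` and `B + Q(v)`. Hence `arctan (μ / B)` is additive over children, and the summand
`1 / (Q(u) Q(v) Q(u + v))` is exactly the drop of the potential
`G(s) = arctan (μ / s) / (2μ³) - s / (2μ² (s² + μ²))` from a node to its two children. Summing
over the first `n` levels telescopes to `G(1)` minus the potential of level `n`; since `B` grows by
at least `1` per level and `arctan (μ / B)` sums to `arctan μ` over every level, that remainder is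
at most `arctan μ / (2μ (n + 1)²)`.
-/

/-- Quadruples `(a,b,c,d)` of integers with `a ≥ b ≥ 0`, `c ≥ d ≥ 0` and `a·d − b·c = 1`. -/
def T : Set (ℤ × ℤ × ℤ × ℤ) :=
  {p | p.2.1 ≤ p.1 ∧ 0 ≤ p.2.1 ∧ p.2.2.2 ≤ p.2.2.1 ∧ 0 ≤ p.2.2.2 ∧
    p.1 * p.2.2.2 - p.2.1 * p.2.2.1 = 1}

open Real Filter Topology

theorem HasSum.of_sigma_of_nonneg {α : Type*} {β : α → Type*} [∀ a, Fintype (β a)]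
    {f : (Σ a, β a) → ℝ} (hf : ∀ x, 0 ≤ f x) {r : ℝ} (h : HasSum (fun a => ∑ b, f ⟨a, b⟩) r) :
    HasSum f r := by
  have hfibre : ∀ a, Summable fun b => f ⟨a, b⟩ := fun _ => Summable.of_finite
  have hsum : Summable f :=
    (summable_sigma_of_nonneg hf).2 ⟨hfibre, by simpa only [tsum_fintype] using h.summable⟩
  convert hsum.hasSum
  rw [hsum.tsum_sigma' hfibre, ← h.tsum_eq]
  simp only [tsum_fintype]

theorem Real.div_one_add_sq_le_arctan {x : ℝ} (hx : 0 ≤ x) : x / (1 + x ^ 2) ≤ arctan x := by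
  have hsin := sin_le (by positivity : 0 ≤ 2 * arctan x)
  rw [sin_two_mul, sin_arctan, cos_arctan] at hsin
  have hsqrt : √(1 + x ^ 2) * √(1 + x ^ 2) = 1 + x ^ 2 := mul_self_sqrt (by positivity)
  rw [mul_assoc, div_mul_div_comm, mul_one, hsqrt] at hsin
  linarith

theorem Real.arctan_le_self {x : ℝ} (hx : 0 ≤ x) : arctan x ≤ x := by
  simpa using le_tan (arctan_nonneg.2 hx) (arctan_lt_pi_div_two x)

namespace SternBrocot

/-- `child true` replaces `v` by `u + v`, `child false` replaces `u` by `u + v`. -/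
def child : Bool → ℤ × ℤ × ℤ × ℤ → ℤ × ℤ × ℤ × ℤ
  | true, (a, b, c, d) => (a, b, a + c, b + d)
  | false, (a, b, c, d) => (a + c, b + d, c, d)

def walk (p : ℤ × ℤ × ℤ × ℤ) (l : List Bool) : ℤ × ℤ × ℤ × ℤ :=
  l.foldl (fun q m => child m q) p

def root : ℤ × ℤ × ℤ × ℤ := (1, 0, 1, 1)

theorem mem_T_iff {a b c d : ℤ} :
    (a, b, c, d) ∈ T ↔ b ≤ a ∧ 0 ≤ b ∧ d ≤ c ∧ 0 ≤ d ∧ a * d - b * c = 1 :=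
  Iff.rfl

theorem root_mem : root ∈ T := by
  simp [root, mem_T_iff]

theorem child_mem {p : ℤ × ℤ × ℤ × ℤ} (hp : p ∈ T) (m : Bool) : child m p ∈ T := by
  obtain ⟨a, b, c, d⟩ := p
  obtain ⟨h₁, h₂, h₃, h₄, hdet⟩ := mem_T_iff.1 hp
  cases m <;> simp only [child, mem_T_iff]
  · exact ⟨by omega, by omega, h₃, h₄, by linear_combination hdet⟩
  · exact ⟨h₁, h₂, by omega, by omega, by linear_combination hdet⟩

theorem walk_mem {p : ℤ × ℤ × ℤ × ℤ} (hp : p ∈ T) (l : List Bool) : walk p l ∈ T := by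
  induction l generalizing p with
  | nil => exact hp
  | cons m l ih => exact ih (child_mem hp m)

theorem walk_append_singleton (p : ℤ × ℤ × ℤ × ℤ) (l : List Bool) (m : Bool) :
    walk p (l ++ [m]) = child m (walk p l) :=
  List.foldl_append

theorem one_le_of_mem {p : ℤ × ℤ × ℤ × ℤ} (hp : p ∈ T) : 1 ≤ p.1 ∧ 1 ≤ p.2.2.1 := by
  obtain ⟨a, b, c, d⟩ := p
  obtain ⟨h₁, h₂, h₃, h₄, hdet⟩ := mem_T_iff.1 hp
  simp only
  constructor <;> by_contra! h
  · obtain rfl : a = 0 := by omega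
    obtain rfl : b = 0 := by omega
    simp at hdet
  · obtain rfl : c = 0 := by omega
    obtain rfl : d = 0 := by omega
    simp at hdet

theorem exists_child_eq {p : ℤ × ℤ × ℤ × ℤ} (hp : p ∈ T) (hne : p ≠ root) :
    ∃ q ∈ T, ∃ m, child m q = p ∧ q.1 + q.2.2.1 < p.1 + p.2.2.1 := by
  obtain ⟨a, b, c, d⟩ := p
  obtain ⟨ha, hc⟩ := one_le_of_mem hp
  obtain ⟨h₁, h₂, h₃, h₄, hdet⟩ := mem_T_iff.1 hp
  simp only at ha hc
  rcases lt_trichotomy a c with h | rfl | h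
  · refine ⟨(a, b, c - a, d - b), mem_T_iff.2 ⟨h₁, h₂, ?_, ?_, by linear_combination hdet⟩,
      true, by simp [child], by simp; omega⟩
    · nlinarith
    · nlinarith
  · have hunit : a * (d - b) = 1 := by linear_combination hdet
    obtain rfl : a = 1 := Int.eq_one_of_mul_eq_one_right (by omega) hunit
    obtain rfl : b = 0 := by omega
    obtain rfl : d = 1 := by omega
    exact absurd rfl hne
  · refine ⟨(a - c, b - d, c, d), mem_T_iff.2 ⟨?_, ?_, h₃, h₄, by linear_combination hdet⟩,
      false, by simp [child], by simp; omega⟩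
    · nlinarith
    · nlinarith

theorem exists_walk_root_eq {p : ℤ × ℤ × ℤ × ℤ} (hp : p ∈ T) : ∃ l, walk root l = p := by
  induction hn : (p.1 + p.2.2.1).toNat using Nat.strong_induction_on generalizing p with
  | _ n ih =>
    by_cases hroot : p = root
    · exact ⟨[], hroot.symm⟩
    obtain ⟨q, hq, m, rfl, hlt⟩ := exists_child_eq hp hroot
    have := one_le_of_mem hq
    obtain ⟨l, rfl⟩ := ih _ (by omega) hq rfl
    exact ⟨l ++ [m], walk_append_singleton _ _ _⟩

theorem child_injective (m : Bool) : Function.Injective (child m) := by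
  rintro ⟨a, b, c, d⟩ ⟨a', b', c', d'⟩ h
  cases m <;> simp only [child, Prod.mk.injEq] at h ⊢ <;> omega

theorem fst_lt_third_child_true {q : ℤ × ℤ × ℤ × ℤ} (hq : q ∈ T) :
    (child true q).1 < (child true q).2.2.1 := by
  obtain ⟨a, b, c, d⟩ := q
  have := (one_le_of_mem hq).2
  simp only [child] at this ⊢
  omega

theorem third_lt_fst_child_false {q : ℤ × ℤ × ℤ × ℤ} (hq : q ∈ T) :
    (child false q).2.2.1 < (child false q).1 := by
  obtain ⟨a, b, c, d⟩ := q
  have := (one_le_of_mem hq).1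
  simp only [child] at this ⊢
  omega

theorem child_ne_root {q : ℤ × ℤ × ℤ × ℤ} (hq : q ∈ T) (m : Bool) : child m q ≠ root := by
  intro h
  cases m
  · have := third_lt_fst_child_false hq; simp [h, root] at this
  · have := fst_lt_third_child_true hq; simp [h, root] at this

theorem eq_of_child_eq_child {q q' : ℤ × ℤ × ℤ × ℤ} (hq : q ∈ T) (hq' : q' ∈ T) {m m' : Bool}
    (h : child m q = child m' q') : m = m' ∧ q = q' := by
  obtain rfl : m = m' := by
    have h₁ := fst_lt_third_child_true hq
    have h₂ := fst_lt_third_child_true hq'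
    have h₃ := third_lt_fst_child_false hq
    have h₄ := third_lt_fst_child_false hq'
    cases m <;> cases m' <;> simp only [h] at * <;> first | rfl | omega
  exact ⟨rfl, child_injective m h⟩

theorem walk_root_injective : Function.Injective (walk root) := by
  intro l l' h
  induction l using List.reverseRecOn generalizing l' with
  | nil =>
    cases l' using List.reverseRecOn with
    | nil => rfl
    | append_singleton l' m' =>
      rw [walk_append_singleton] at h
      exact absurd h.symm (child_ne_root (walk_mem root_mem l') m')
  | append_singleton l m ih =>
    cases l' using List.reverseRecOn with
    | nil =>
      rw [walk_append_singleton] at h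
      exact absurd h (child_ne_root (walk_mem root_mem l) m)
    | append_singleton l' m' =>
      rw [walk_append_singleton, walk_append_singleton] at h
      obtain ⟨rfl, hwalk⟩ := eq_of_child_eq_child (walk_mem root_mem l) (walk_mem root_mem l') h
      rw [ih hwalk]

noncomputable def walkEquiv : List Bool ≃ T :=
  Equiv.ofBijective (fun l => ⟨walk root l, walk_mem root_mem l⟩)
    ⟨fun _ _ h => walk_root_injective (congrArg Subtype.val h),
     fun p => (exists_walk_root_eq p.2).imp fun _ hl => Subtype.ext hl⟩

theorem arctan_div_eq_add {μ s q₁ q₂ : ℝ} (hs : 0 < s) (hq₁ : 0 < q₁) (hq₂ : 0 < q₂)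
    (h : q₁ * q₂ = s ^ 2 + μ ^ 2) :
    arctan (μ / s) = arctan (μ / (s + q₁)) + arctan (μ / (s + q₂)) := by
  have hlt : μ / (s + q₁) * (μ / (s + q₂)) < 1 := by
    rw [div_mul_div_comm, div_lt_one (by positivity)]
    nlinarith
  have hden :
      1 - μ / (s + q₁) * (μ / (s + q₂)) = s * (2 * s + q₁ + q₂) / ((s + q₁) * (s + q₂)) := by
    field_simp
    linear_combination h
  rw [arctan_add hlt, hden]
  congr 1
  field_simp
  ring

noncomputable def potential (μ s : ℝ) : ℝ :=
  arctan (μ / s) / (2 * μ ^ 3) - s / (2 * μ ^ 2 * (s ^ 2 + μ ^ 2))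

theorem potential_eq_add {μ s q₁ q₂ : ℝ} (hμ : μ ≠ 0) (hs : 0 < s) (hq₁ : 0 < q₁) (hq₂ : 0 < q₂)
    (h : q₁ * q₂ = s ^ 2 + μ ^ 2) :
    potential μ s = 1 / (q₁ * q₂ * (q₁ + q₂ + 2 * s)) + potential μ (s + q₁) +
      potential μ (s + q₂) := by
  have e₁ : (s + q₁) ^ 2 + μ ^ 2 = q₁ * (q₁ + q₂ + 2 * s) := by linear_combination -h
  have e₂ : (s + q₂) ^ 2 + μ ^ 2 = q₂ * (q₁ + q₂ + 2 * s) := by linear_combination -h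
  simp only [potential]
  rw [arctan_div_eq_add hs hq₁ hq₂ h, e₁, e₂, ← h]
  field_simp
  linear_combination 2 * μ * h

theorem potential_eq_arctan_sub {μ s : ℝ} (hμ : 0 < μ) (hs : 0 < s) :
    potential μ s = (arctan (μ / s) - μ / s / (1 + (μ / s) ^ 2)) / (2 * μ ^ 3) := by
  simp only [potential]
  field_simp

theorem potential_nonneg {μ s : ℝ} (hμ : 0 < μ) (hs : 0 < s) : 0 ≤ potential μ s := by
  rw [potential_eq_arctan_sub hμ hs]
  have := div_one_add_sq_le_arctan (x := μ / s) (by positivity)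
  exact div_nonneg (by linarith) (by positivity)

theorem potential_le {μ s : ℝ} (hμ : 0 < μ) (hs : 0 < s) :
    potential μ s ≤ arctan (μ / s) / (2 * μ * s ^ 2) := by
  set x := μ / s with hx
  have hx₀ : 0 ≤ x := by positivity
  have hlow := mul_le_mul_of_nonneg_left (div_one_add_sq_le_arctan hx₀) (sq_nonneg x)
  have hup := arctan_le_self hx₀
  have key : arctan x - x / (1 + x ^ 2) ≤ x ^ 2 * arctan x := by
    have : x - x / (1 + x ^ 2) = x ^ 2 * (x / (1 + x ^ 2)) := by field_simp; ring
    linarith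
  calc potential μ s ≤ x ^ 2 * arctan x / (2 * μ ^ 3) := by
        rw [potential_eq_arctan_sub hμ hs]; gcongr
    _ = arctan x / (2 * μ * s ^ 2) := by rw [hx]; field_simp

section
variable (μ : ℝ)

/-- `Q(u)`; `quadSnd` is `Q(v)` and `pairing` is `B(u, v)`. -/
def quadFst (p : ℤ × ℤ × ℤ × ℤ) : ℝ := (p.1 : ℝ) ^ 2 + μ ^ 2 * (p.2.1 : ℝ) ^ 2

def quadSnd (p : ℤ × ℤ × ℤ × ℤ) : ℝ := (p.2.2.1 : ℝ) ^ 2 + μ ^ 2 * (p.2.2.2 : ℝ) ^ 2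

def pairing (p : ℤ × ℤ × ℤ × ℤ) : ℝ :=
  (p.1 : ℝ) * p.2.2.1 + μ ^ 2 * (p.2.1 : ℝ) * p.2.2.2

noncomputable def term (p : ℤ × ℤ × ℤ × ℤ) : ℝ :=
  1 / (((p.1 : ℝ) ^ 2 + μ ^ 2 * (p.2.1 : ℝ) ^ 2) *
    ((p.2.2.1 : ℝ) ^ 2 + μ ^ 2 * (p.2.2.2 : ℝ) ^ 2) *
    (((p.1 : ℝ) + p.2.2.1) ^ 2 + μ ^ 2 * ((p.2.1 : ℝ) + p.2.2.2) ^ 2))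

theorem term_nonneg (p : ℤ × ℤ × ℤ × ℤ) : 0 ≤ term μ p := by
  unfold term
  positivity

theorem term_eq (p : ℤ × ℤ × ℤ × ℤ) :
    term μ p =
      1 / (quadFst μ p * quadSnd μ p * (quadFst μ p + quadSnd μ p + 2 * pairing μ p)) := by
  simp only [term, quadFst, quadSnd, pairing]
  ring

theorem pairing_child_true (p : ℤ × ℤ × ℤ × ℤ) :
    pairing μ (child true p) = pairing μ p + quadFst μ p := by
  obtain ⟨a, b, c, d⟩ := p
  simp only [pairing, quadFst, child]
  push_cast
  ring

theorem pairing_child_false (p : ℤ × ℤ × ℤ × ℤ) :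
    pairing μ (child false p) = pairing μ p + quadSnd μ p := by
  obtain ⟨a, b, c, d⟩ := p
  simp only [pairing, quadSnd, child]
  push_cast
  ring

theorem quadFst_mul_quadSnd {p : ℤ × ℤ × ℤ × ℤ} (hdet : p.1 * p.2.2.2 - p.2.1 * p.2.2.1 = 1) :
    quadFst μ p * quadSnd μ p = pairing μ p ^ 2 + μ ^ 2 := by
  obtain ⟨a, b, c, d⟩ := p
  have hdet' : (a : ℝ) * d - b * c = 1 := by exact_mod_cast hdet
  simp only [quadFst, quadSnd, pairing]
  linear_combination μ ^ 2 * ((a : ℝ) * d - b * c + 1) * hdet'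

theorem one_le_quadFst {p : ℤ × ℤ × ℤ × ℤ} (hp : p ∈ T) : 1 ≤ quadFst μ p := by
  have : (1 : ℝ) ≤ p.1 := by exact_mod_cast (one_le_of_mem hp).1
  simp only [quadFst]
  nlinarith [sq_nonneg (μ * p.2.1)]

theorem one_le_quadSnd {p : ℤ × ℤ × ℤ × ℤ} (hp : p ∈ T) : 1 ≤ quadSnd μ p := by
  have : (1 : ℝ) ≤ p.2.2.1 := by exact_mod_cast (one_le_of_mem hp).2
  simp only [quadSnd]
  nlinarith [sq_nonneg (μ * p.2.2.2)]

theorem one_le_pairing {p : ℤ × ℤ × ℤ × ℤ} (hp : p ∈ T) : 1 ≤ pairing μ p := by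
  obtain ⟨ha, hc⟩ := one_le_of_mem hp
  have hb : (0 : ℝ) ≤ p.2.1 := by exact_mod_cast hp.2.1
  have hd : (0 : ℝ) ≤ p.2.2.2 := by exact_mod_cast hp.2.2.2.1
  have hac : (1 : ℝ) ≤ p.1 * p.2.2.1 := by exact_mod_cast one_le_mul_of_one_le_of_one_le ha hc
  simp only [pairing]
  nlinarith [mul_nonneg (mul_nonneg (sq_nonneg μ) hb) hd]

theorem pairing_add_one_le_child {p : ℤ × ℤ × ℤ × ℤ} (hp : p ∈ T) (m : Bool) :
    pairing μ p + 1 ≤ pairing μ (child m p) := by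
  cases m
  · rw [pairing_child_false]; linarith [one_le_quadSnd μ hp]
  · rw [pairing_child_true]; linarith [one_le_quadFst μ hp]

theorem pairing_root : pairing μ root = 1 := by
  simp [pairing, root]

theorem arctan_div_pairing_eq {p : ℤ × ℤ × ℤ × ℤ} (hp : p ∈ T) :
    arctan (μ / pairing μ p) =
      arctan (μ / pairing μ (child true p)) + arctan (μ / pairing μ (child false p)) := by
  rw [pairing_child_true, pairing_child_false]
  exact arctan_div_eq_add (by linarith [one_le_pairing μ hp]) (by linarith [one_le_quadFst μ hp])
    (by linarith [one_le_quadSnd μ hp]) (quadFst_mul_quadSnd μ hp.2.2.2.2)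

end

variable {μ : ℝ}

theorem potential_pairing_eq (hμ : μ ≠ 0) {p : ℤ × ℤ × ℤ × ℤ} (hp : p ∈ T) :
    potential μ (pairing μ p) = term μ p + potential μ (pairing μ (child true p)) +
      potential μ (pairing μ (child false p)) := by
  rw [pairing_child_true, pairing_child_false, term_eq]
  exact potential_eq_add hμ (by linarith [one_le_pairing μ hp]) (by linarith [one_le_quadFst μ hp])
    (by linarith [one_le_quadSnd μ hp]) (quadFst_mul_quadSnd μ hp.2.2.2.2)

def levelSum {M : Type*} [AddCommMonoid M] (φ : ℤ × ℤ × ℤ × ℤ → M) (n : ℕ)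
    (p : ℤ × ℤ × ℤ × ℤ) : M :=
  ∑ w : Fin n → Bool, φ (walk p (List.ofFn w))

section
variable {M : Type*} [AddCommMonoid M] (φ : ℤ × ℤ × ℤ × ℤ → M)

theorem levelSum_zero (p : ℤ × ℤ × ℤ × ℤ) : levelSum φ 0 p = φ p := by
  simp [levelSum, walk]

theorem levelSum_succ (n : ℕ) (p : ℤ × ℤ × ℤ × ℤ) :
    levelSum φ (n + 1) p = levelSum φ n (child true p) + levelSum φ n (child false p) := by
  simp only [levelSum]
  rw [← (Fin.consEquiv fun _ => Bool).sum_comp, Fintype.sum_prod_type, Fintype.sum_bool]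
  simp [Fin.consEquiv, List.ofFn_succ, walk]

end

theorem sum_range_levelSum_term (hμ : μ ≠ 0) (n : ℕ) {p : ℤ × ℤ × ℤ × ℤ} (hp : p ∈ T) :
    ∑ k ∈ Finset.range n, levelSum (term μ) k p =
      potential μ (pairing μ p) - levelSum (fun q => potential μ (pairing μ q)) n p := by
  induction n generalizing p with
  | zero => simp [levelSum_zero]
  | succ n ih =>
    simp only [Finset.sum_range_succ', levelSum_succ, Finset.sum_add_distrib,
      ih (child_mem hp true), ih (child_mem hp false), levelSum_zero, potential_pairing_eq hμ hp]
    ring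

theorem levelSum_potential_le (hμ : 0 < μ) (n : ℕ) {p : ℤ × ℤ × ℤ × ℤ} (hp : p ∈ T) :
    levelSum (fun q => potential μ (pairing μ q)) n p ≤
      arctan (μ / pairing μ p) / (2 * μ * (pairing μ p + n) ^ 2) := by
  induction n generalizing p with
  | zero => simpa [levelSum_zero] using potential_le hμ (by linarith [one_le_pairing μ hp])
  | succ n ih =>
    have hchild : ∀ m, levelSum (fun q => potential μ (pairing μ q)) n (child m p) ≤
        arctan (μ / pairing μ (child m p)) / (2 * μ * (pairing μ p + ↑(n + 1)) ^ 2) := by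
      intro m
      have hs := one_le_pairing μ hp
      have hsm := pairing_add_one_le_child μ hp m
      refine (ih (child_mem hp m)).trans (div_le_div_of_nonneg_left ?_ (by positivity) ?_)
      · exact arctan_nonneg.2 (div_nonneg hμ.le (by linarith))
      · push_cast
        exact mul_le_mul_of_nonneg_left (pow_le_pow_left₀ (by positivity) (by linarith) 2)
          (by positivity)
    rw [levelSum_succ, arctan_div_pairing_eq μ hp, add_div]
    exact add_le_add (hchild true) (hchild false)

theorem levelSum_potential_nonneg (hμ : 0 < μ) (n : ℕ) {p : ℤ × ℤ × ℤ × ℤ} (hp : p ∈ T) :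
    0 ≤ levelSum (fun q => potential μ (pairing μ q)) n p :=
  Finset.sum_nonneg fun w _ =>
    potential_nonneg hμ (by linarith [one_le_pairing μ (walk_mem hp (List.ofFn w))])

theorem tendsto_levelSum_potential (hμ : 0 < μ) :
    Tendsto (fun n => levelSum (fun q => potential μ (pairing μ q)) n root) atTop (𝓝 0) := by
  have hbound :
      Tendsto (fun n : ℕ => arctan μ / (2 * μ) * (1 / ((n : ℝ) + 1)) ^ 2) atTop (𝓝 0) := by
    simpa using (tendsto_one_div_add_atTop_nhds_zero_nat.pow 2).const_mul (arctan μ / (2 * μ))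
  refine squeeze_zero (fun n => levelSum_potential_nonneg hμ n root_mem) (fun n => ?_) hbound
  calc levelSum (fun q => potential μ (pairing μ q)) n root
      ≤ arctan (μ / pairing μ root) / (2 * μ * (pairing μ root + n) ^ 2) :=
        levelSum_potential_le hμ n root_mem
    _ = arctan μ / (2 * μ) * (1 / ((n : ℝ) + 1)) ^ 2 := by
        rw [pairing_root, div_one]
        field_simp
        ring

theorem hasSum_levelSum_term (hμ : 0 < μ) :
    HasSum (fun n => levelSum (term μ) n root) (potential μ 1) := by
  rw [hasSum_iff_tendsto_nat_of_nonneg (f := fun n => levelSum (term μ) n root)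
    fun n => Finset.sum_nonneg fun _ _ => term_nonneg μ _]
  have hlim := (tendsto_levelSum_potential hμ).const_sub (potential μ 1)
  rw [sub_zero] at hlim
  refine hlim.congr fun n => ?_
  rw [sum_range_levelSum_term hμ.ne' n root_mem, pairing_root]

theorem hasSum_term_walk_root (hμ : 0 < μ) :
    HasSum (fun l => term μ (walk root l)) (potential μ 1) := by
  rw [← List.equivSigmaTuple.symm.hasSum_iff]
  exact .of_sigma_of_nonneg (fun _ => term_nonneg μ _) (hasSum_levelSum_term hμ)

end SternBrocot

theorem stmt_10 (μ : ℝ) (hμ : 0 < μ) :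
    HasSum
      (fun p : T =>
        1 / (((p.val.1 : ℝ) ^ 2 + μ ^ 2 * (p.val.2.1 : ℝ) ^ 2) *
          ((p.val.2.2.1 : ℝ) ^ 2 + μ ^ 2 * (p.val.2.2.2 : ℝ) ^ 2) *
          (((p.val.1 : ℝ) + (p.val.2.2.1 : ℝ)) ^ 2 +
            μ ^ 2 * ((p.val.2.1 : ℝ) + (p.val.2.2.2 : ℝ)) ^ 2)))
      ((1 / (4 * μ ^ 2)) * (2 * Real.arctan μ / μ - 2 / (1 + μ ^ 2))) := by
  have hvalue : SternBrocot.potential μ 1 =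
      (1 / (4 * μ ^ 2)) * (2 * Real.arctan μ / μ - 2 / (1 + μ ^ 2)) := by
    simp only [SternBrocot.potential, div_one]
    field_simp
    ring
  rw [← hvalue, ← SternBrocot.walkEquiv.hasSum_iff]
  exact SternBrocot.hasSum_term_walk_root hμ
end

section
/- The series whose terms are (1/( a²·c²·(a+c)² ))·( b²/a² + d²/c² + (b+d)²/(a+c)² ), summed over all quadruples (a,b,c,d) of nonnegative integers with a ≥ b, c ≥ d and a·d − b·c = 1, converges and its sum equals 2/5. -/
/-!
The quadruples in `T` are the pairs of Farey neighbours `b/a < d/c` in `[0, 1]`, and they form the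
Stern–Brocot tree: each one arises from `(1, 0, 1, 1)` by a unique sequence of the two mediant
insertions `(a, b, c, d) ↦ (a, b, a + c, b + d)` and `(a, b, c, d) ↦ (a + c, b + d, c, d)`.
The potential `G = bd/(ac)⁴ + (2/5)/(ac)⁵` satisfies `G p = G (left p) + G (right p) + f p`, so the
sum of the summand `f` over the first `n` levels of the tree telescopes to `2/5 − ∑_{level n} G`.
On level `n` we have `ac ≥ n + 1`, hence `G ≤ (7/5)/(n + 1) · 1/(ac)`, and the widths
`d/c − b/a = 1/(ac)` of the intervals of one level add up to `1`; so the remainder tends to `0`.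
-/

open Finset Filter Topology

theorem hasSum_of_monotone_of_tendsto {ι : Type*} {f : ι → ℝ} (hf : 0 ≤ f) {s : ℕ → Finset ι}
    (hs : Monotone s) (hcover : ∀ i, ∃ n, i ∈ s n) {a : ℝ}
    (ha : Tendsto (fun n => ∑ i ∈ s n, f i) atTop (𝓝 a)) : HasSum f a := by
  have hs_top := tendsto_atTop_finset_of_monotone hs hcover
  have hle : ∀ n, ∑ i ∈ s n, f i ≤ a :=
    Monotone.ge_of_tendsto (fun m n hmn => sum_le_sum_of_subset_of_nonneg (hs hmn)
      fun i _ _ => hf i) ha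
  have hsum : Summable f := summable_of_sum_le hf fun u => by
    obtain ⟨n, hn⟩ := (hs_top.eventually (eventually_ge_atTop u)).exists
    exact (sum_le_sum_of_subset_of_nonneg hn fun i _ _ => hf i).trans (hle n)
  exact tendsto_nhds_unique (hsum.hasSum.comp hs_top) ha ▸ hsum.hasSum

theorem hasSum_of_tendsto_sum_range_sum {ι : Type*} [DecidableEq ι] {f : ι → ℝ} (hf : 0 ≤ f)
    {L : ℕ → Finset ι} (hdisj : ∀ {m n i}, i ∈ L m → i ∈ L n → m = n)
    (hcover : ∀ i, ∃ n, i ∈ L n) {a : ℝ}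
    (ha : Tendsto (fun n => ∑ k ∈ range n, ∑ i ∈ L k, f i) atTop (𝓝 a)) : HasSum f a := by
  refine hasSum_of_monotone_of_tendsto hf (s := fun n => (range n).biUnion L)
    (fun m n hmn => biUnion_subset_biUnion_of_subset_left L (range_subset_range.2 hmn))
    (fun i => (hcover i).elim fun n hn =>
      ⟨n + 1, mem_biUnion.2 ⟨n, self_mem_range_succ n, hn⟩⟩) ?_
  refine ha.congr fun n => (sum_biUnion fun m _ k _ hmk => ?_).symm
  exact disjoint_left.2 fun i hm hk => hmk (hdisj hm hk)

namespace FareyTree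

noncomputable def summand (a b c d : ℝ) : ℝ :=
  1 / (a ^ 2 * c ^ 2 * (a + c) ^ 2) * (b ^ 2 / a ^ 2 + d ^ 2 / c ^ 2 + (b + d) ^ 2 / (a + c) ^ 2)

noncomputable def potential (a b c d : ℝ) : ℝ :=
  b * d / (a * c) ^ 4 + 2 / 5 / (a * c) ^ 5

noncomputable def width (a b c d : ℝ) : ℝ :=
  d / c - b / a

theorem summand_nonneg (a b c d : ℝ) : 0 ≤ summand a b c d := by
  unfold summand; positivity

theorem potential_eq {a b c d : ℝ} (ha : a ≠ 0) (hc : c ≠ 0) (hac : a + c ≠ 0)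
    (hdet : a * d - b * c = 1) :
    potential a b c d =
      potential a b (a + c) (b + d) + potential (a + c) (b + d) c d + summand a b c d := by
  obtain rfl : d = (1 + b * c) / a := by field_simp; linarith
  unfold potential summand
  field_simp
  ring

theorem width_eq (a b c d : ℝ) :
    width a b c d = width a b (a + c) (b + d) + width (a + c) (b + d) c d := by
  unfold width; ring

theorem potential_nonneg {a b c d : ℝ} (hbd : 0 ≤ b * d) (hac : 0 ≤ a * c) :
    0 ≤ potential a b c d := by
  unfold potential; positivity

theorem potential_le {a b c d m : ℝ} (hbd_le : b * d ≤ a * c) (hm : 1 ≤ m)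
    (hm_le : m ≤ a * c) : potential a b c d ≤ 7 / 5 * (1 / m) * (1 / (a * c)) := by
  set t := a * c
  have ht : 1 ≤ t := hm.trans hm_le
  have hmt : 0 < m * t := by positivity
  have h3 : m * t ≤ t ^ 3 := by
    nlinarith [mul_le_mul_of_nonneg_right hm_le (by positivity : 0 ≤ t)]
  have h5 : m * t ≤ t ^ 5 := h3.trans (pow_le_pow_right₀ ht (by norm_num))
  have hfirst : b * d / t ^ 4 ≤ 1 / (m * t) := by
    rw [div_le_div_iff₀ (by positivity) hmt]
    calc b * d * (m * t) ≤ t * t ^ 3 := mul_le_mul hbd_le h3 hmt.le (by positivity)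
      _ = 1 * t ^ 4 := by ring
  have hsecond : 2 / 5 / t ^ 5 ≤ 2 / 5 / (m * t) :=
    div_le_div_of_nonneg_left (by norm_num) hmt h5
  calc potential a b c d = b * d / t ^ 4 + 2 / 5 / t ^ 5 := rfl
    _ ≤ 1 / (m * t) + 2 / 5 / (m * t) := add_le_add hfirst hsecond
    _ = 7 / 5 * (1 / m) * (1 / t) := by field_simp; ring

theorem mk_mem_T {a b c d : ℤ} :
    (a, b, c, d) ∈ T ↔ b ≤ a ∧ 0 ≤ b ∧ d ≤ c ∧ 0 ≤ d ∧ a * d - b * c = 1 :=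
  Iff.rfl

theorem bounds_of_mk_mem_T {a b c d : ℤ} (h : (a, b, c, d) ∈ T) :
    0 ≤ b ∧ b < a ∧ 0 < d ∧ d ≤ c := by
  obtain ⟨hba, hb, hdc, hd, hdet⟩ := mk_mem_T.1 h
  refine ⟨hb, lt_of_le_of_ne hba fun hab => ?_, lt_of_le_of_ne hd fun hd0 => ?_, hdc⟩
  · subst hab; nlinarith [mul_nonneg hb (sub_nonneg.2 hdc)]
  · subst hd0; nlinarith [mul_nonneg hb (hd.trans hdc)]

def root : T := ⟨(1, 0, 1, 1), by norm_num [mk_mem_T]⟩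

theorem left_mem {a b c d : ℤ} (h : (a, b, c, d) ∈ T) : (a, b, a + c, b + d) ∈ T := by
  obtain ⟨hba, hb, hdc, hd, hdet⟩ := mk_mem_T.1 h
  exact mk_mem_T.2 ⟨hba, hb, by omega, by omega, by linear_combination hdet⟩

theorem right_mem {a b c d : ℤ} (h : (a, b, c, d) ∈ T) : (a + c, b + d, c, d) ∈ T := by
  obtain ⟨hba, hb, hdc, hd, hdet⟩ := mk_mem_T.1 h
  exact mk_mem_T.2 ⟨by omega, by omega, hdc, hd, by linear_combination hdet⟩

def left : T → T
  | ⟨(a, b, c, d), h⟩ => ⟨(a, b, a + c, b + d), left_mem h⟩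

def right : T → T
  | ⟨(a, b, c, d), h⟩ => ⟨(a + c, b + d, c, d), right_mem h⟩

theorem left_injective : Function.Injective left := by
  rintro ⟨⟨a, b, c, d⟩, hp⟩ ⟨⟨a', b', c', d'⟩, hq⟩ h
  simp only [left, Subtype.mk.injEq, Prod.mk.injEq] at h ⊢
  omega

theorem right_injective : Function.Injective right := by
  rintro ⟨⟨a, b, c, d⟩, hp⟩ ⟨⟨a', b', c', d'⟩, hq⟩ h
  simp only [right, Subtype.mk.injEq, Prod.mk.injEq] at h ⊢
  omega

theorem left_ne_right (p q : T) : left p ≠ right q := by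
  obtain ⟨⟨a, b, c, d⟩, hp⟩ := p
  obtain ⟨⟨a', b', c', d'⟩, hq⟩ := q
  have := bounds_of_mk_mem_T hp
  have := bounds_of_mk_mem_T hq
  simp only [left, right, ne_eq, Subtype.mk.injEq, Prod.mk.injEq]
  omega

theorem root_ne_left (p : T) : root ≠ left p := by
  obtain ⟨⟨a, b, c, d⟩, hp⟩ := p
  have := bounds_of_mk_mem_T hp
  simp only [root, left, ne_eq, Subtype.mk.injEq, Prod.mk.injEq]
  omega

theorem root_ne_right (p : T) : root ≠ right p := by
  obtain ⟨⟨a, b, c, d⟩, hp⟩ := p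
  have := bounds_of_mk_mem_T hp
  simp only [root, right, ne_eq, Subtype.mk.injEq, Prod.mk.injEq]
  omega

theorem eq_root_or_exists_left_or_right (p : T) :
    p = root ∨ (∃ q, left q = p) ∨ ∃ q, right q = p := by
  obtain ⟨⟨a, b, c, d⟩, hp⟩ := p
  obtain ⟨hb, hba, hd, hdc⟩ := bounds_of_mk_mem_T hp
  have hdet := (mk_mem_T.1 hp).2.2.2.2
  rcases lt_trichotomy a c with hac | rfl | hca
  · refine Or.inr (Or.inl ⟨⟨(a, b, c - a, d - b), mk_mem_T.2 ⟨hba.le, hb, ?_, ?_, ?_⟩⟩, ?_⟩)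
    · nlinarith [mul_nonneg (by omega : (0 : ℤ) ≤ a - 1 - b) (by omega : (0 : ℤ) ≤ c - a)]
    · nlinarith [mul_nonneg hb (by omega : (0 : ℤ) ≤ c - a)]
    · linear_combination hdet
    · simp only [left, Subtype.mk.injEq, Prod.mk.injEq, true_and]; omega
  · have ha : a = 1 :=
      Int.eq_one_of_mul_eq_one_right (b := d - b) (by omega) (by linear_combination hdet)
    subst ha
    left
    simp only [root, Subtype.mk.injEq, Prod.mk.injEq, true_and]
    omega
  · refine Or.inr (Or.inr ⟨⟨(a - c, b - d, c, d), mk_mem_T.2 ⟨?_, ?_, hdc, hd.le, ?_⟩⟩, ?_⟩)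
    · nlinarith [mul_nonneg (by omega : (0 : ℤ) ≤ a - c) (by omega : (0 : ℤ) ≤ c - d)]
    · nlinarith [mul_nonneg (by omega : (0 : ℤ) ≤ a - c - 1) (by omega : (0 : ℤ) ≤ d - 1)]
    · linear_combination hdet
    · simp only [right, Subtype.mk.injEq, Prod.mk.injEq, and_true]; omega

def level : ℕ → Finset T
  | 0 => {root}
  | n + 1 => (level n).image left ∪ (level n).image right

theorem mem_level_succ {n : ℕ} {p : T} :
    p ∈ level (n + 1) ↔ (∃ q ∈ level n, left q = p) ∨ ∃ q ∈ level n, right q = p := by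
  simp only [level, mem_union, mem_image]

theorem sum_level_succ (f : T → ℝ) (n : ℕ) :
    ∑ p ∈ level (n + 1), f p = ∑ p ∈ level n, (f (left p) + f (right p)) := by
  have hdisj : Disjoint ((level n).image left) ((level n).image right) := by
    simp only [disjoint_left, mem_image]
    rintro _ ⟨p, -, rfl⟩ ⟨q, -, h⟩
    exact left_ne_right p q h.symm
  rw [level, sum_union hdisj, sum_image left_injective.injOn, sum_image right_injective.injOn,
    sum_add_distrib]

theorem root_notMem_level_succ (n : ℕ) : root ∉ level (n + 1) := by
  rintro h
  rcases mem_level_succ.1 h with ⟨q, -, h⟩ | ⟨q, -, h⟩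
  · exact root_ne_left q h.symm
  · exact root_ne_right q h.symm

theorem eq_of_mem_level : ∀ {m n : ℕ} {p : T}, p ∈ level m → p ∈ level n → m = n
  | 0, 0, _, _, _ => rfl
  | 0, n + 1, _, hm, hn => by
    rw [level, mem_singleton] at hm
    exact absurd (hm ▸ hn) (root_notMem_level_succ n)
  | m + 1, 0, _, hm, hn => by
    rw [level, mem_singleton] at hn
    exact absurd (hn ▸ hm) (root_notMem_level_succ m)
  | m + 1, n + 1, _, hm, hn => by
    rcases mem_level_succ.1 hm with ⟨q, hq, rfl⟩ | ⟨q, hq, rfl⟩ <;>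
      rcases mem_level_succ.1 hn with ⟨r, hr, hrq⟩ | ⟨r, hr, hrq⟩
    · rw [eq_of_mem_level hq (left_injective hrq ▸ hr)]
    · exact absurd hrq.symm (left_ne_right q r)
    · exact absurd hrq (left_ne_right r q)
    · rw [eq_of_mem_level hq (right_injective hrq ▸ hr)]

def size (p : T) : ℕ :=
  (p.1.1 + p.1.2.2.1).toNat

theorem size_lt_size_left (p : T) : size p < size (left p) := by
  obtain ⟨⟨a, b, c, d⟩, hp⟩ := p
  have := bounds_of_mk_mem_T hp
  simp only [size, left]
  omega

theorem size_lt_size_right (p : T) : size p < size (right p) := by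
  obtain ⟨⟨a, b, c, d⟩, hp⟩ := p
  have := bounds_of_mk_mem_T hp
  simp only [size, right]
  omega

theorem exists_mem_level (p : T) : ∃ n, p ∈ level n := by
  induction p using (measure size).wf.induction with
  | _ p ih =>
  rcases eq_root_or_exists_left_or_right p with rfl | ⟨q, rfl⟩ | ⟨q, rfl⟩
  · exact ⟨0, mem_singleton_self _⟩
  · obtain ⟨n, hn⟩ := ih q (size_lt_size_left q)
    exact ⟨n + 1, mem_level_succ.2 (Or.inl ⟨q, hn, rfl⟩)⟩
  · obtain ⟨n, hn⟩ := ih q (size_lt_size_right q)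
    exact ⟨n + 1, mem_level_succ.2 (Or.inr ⟨q, hn, rfl⟩)⟩

theorem le_mul_of_mem_level : ∀ {n : ℕ} {p : T}, p ∈ level n → (n : ℤ) + 1 ≤ p.1.1 * p.1.2.2.1
  | 0, _, hp => by
    rw [level, mem_singleton] at hp
    subst hp
    decide
  | n + 1, _, hp => by
    rcases mem_level_succ.1 hp with ⟨⟨⟨a, b, c, d⟩, hq⟩, hqn, rfl⟩ | ⟨⟨⟨a, b, c, d⟩, hq⟩, hqn, rfl⟩
    all_goals
      have hn := le_mul_of_mem_level hqn
      have := bounds_of_mk_mem_T hq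
      simp only [left, right] at hn ⊢
      push_cast
      nlinarith

noncomputable def atNode (F : ℝ → ℝ → ℝ → ℝ → ℝ) (p : T) : ℝ :=
  F p.1.1 p.1.2.1 p.1.2.2.1 p.1.2.2.2

theorem sum_level_add_sum_range {G F : T → ℝ} (h : ∀ p, G p = G (left p) + G (right p) + F p)
    (n : ℕ) : ∑ p ∈ level n, G p + ∑ k ∈ range n, ∑ p ∈ level k, F p = G root := by
  induction n with
  | zero => simp [level]
  | succ n ih =>
    rw [← ih, sum_level_succ, sum_range_succ, sum_congr rfl fun p _ => h p]
    simp only [sum_add_distrib]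
    ring

theorem atNode_potential (p : T) :
    atNode potential p =
      atNode potential (left p) + atNode potential (right p) + atNode summand p := by
  obtain ⟨⟨a, b, c, d⟩, hp⟩ := p
  obtain ⟨hb, hba, hd, hdc⟩ := bounds_of_mk_mem_T hp
  have ha : (0 : ℝ) < a := by exact_mod_cast hb.trans_lt hba
  have hc : (0 : ℝ) < c := by exact_mod_cast hd.trans_le hdc
  have hdet : (a : ℝ) * d - b * c = 1 := by exact_mod_cast (mk_mem_T.1 hp).2.2.2.2
  simp only [atNode, left, right]
  push_cast
  exact potential_eq ha.ne' hc.ne' (by positivity) hdet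

theorem atNode_width (p : T) :
    atNode width p = atNode width (left p) + atNode width (right p) := by
  obtain ⟨⟨a, b, c, d⟩, hp⟩ := p
  simp only [atNode, left, right]
  push_cast
  exact width_eq _ _ _ _

theorem sum_level_width (n : ℕ) : ∑ p ∈ level n, atNode width p = 1 := by
  simpa [atNode, width, root] using
    sum_level_add_sum_range (F := 0) (fun p => (atNode_width p).trans (add_zero _).symm) n

theorem atNode_potential_le {n : ℕ} {p : T} (hp : p ∈ level n) :
    atNode potential p ≤ 7 / 5 * (1 / ((n : ℝ) + 1)) * atNode width p := by
  have hn := le_mul_of_mem_level hp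
  obtain ⟨⟨a, b, c, d⟩, hT⟩ := p
  obtain ⟨hb, hba, hd, hdc⟩ := bounds_of_mk_mem_T hT
  have ha : (0 : ℝ) < a := by exact_mod_cast hb.trans_lt hba
  have hc : (0 : ℝ) < c := by exact_mod_cast hd.trans_le hdc
  have hdet : (a : ℝ) * d - b * c = 1 := by exact_mod_cast (mk_mem_T.1 hT).2.2.2.2
  have hbd : (b : ℝ) * d ≤ a * c := by exact_mod_cast mul_le_mul hba.le hdc hd.le (by omega)
  have hn' : (n : ℝ) + 1 ≤ a * c := by exact_mod_cast hn
  have hwidth : width a b c d = 1 / (a * c) := by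
    unfold width; field_simp; linarith
  simp only [atNode]
  rw [hwidth]
  exact potential_le hbd (by linarith [n.cast_nonneg (α := ℝ)]) hn'

theorem atNode_potential_nonneg (p : T) : 0 ≤ atNode potential p := by
  obtain ⟨⟨a, b, c, d⟩, hp⟩ := p
  obtain ⟨hb, hba, hd, hdc⟩ := bounds_of_mk_mem_T hp
  exact potential_nonneg (by exact_mod_cast mul_nonneg hb hd.le)
    (by exact_mod_cast mul_nonneg (hb.trans hba.le) (hd.le.trans hdc))

theorem tendsto_sum_level_potential :
    Tendsto (fun n => ∑ p ∈ level n, atNode potential p) atTop (𝓝 0) := by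
  have hbound (n : ℕ) : ∑ p ∈ level n, atNode potential p ≤ 7 / 5 * (1 / ((n : ℝ) + 1)) :=
    calc ∑ p ∈ level n, atNode potential p
        ≤ ∑ p ∈ level n, 7 / 5 * (1 / ((n : ℝ) + 1)) * atNode width p :=
          sum_le_sum fun p hp => atNode_potential_le hp
      _ = 7 / 5 * (1 / ((n : ℝ) + 1)) := by rw [← mul_sum, sum_level_width, mul_one]
  have hlim := (tendsto_one_div_add_atTop_nhds_zero_nat).const_mul (7 / 5 : ℝ)
  rw [mul_zero] at hlim
  exact squeeze_zero (fun n => sum_nonneg fun p _ => atNode_potential_nonneg p) hbound hlim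

end FareyTree

open FareyTree in
theorem stmt_13 :
    HasSum
      (fun p : T =>
        (1 / ((p.val.1 : ℝ) ^ 2 * (p.val.2.2.1 : ℝ) ^ 2 *
            ((p.val.1 : ℝ) + (p.val.2.2.1 : ℝ)) ^ 2)) *
          ((p.val.2.1 : ℝ) ^ 2 / (p.val.1 : ℝ) ^ 2 +
            (p.val.2.2.2 : ℝ) ^ 2 / (p.val.2.2.1 : ℝ) ^ 2 +
            ((p.val.2.1 : ℝ) + (p.val.2.2.2 : ℝ)) ^ 2 /
              ((p.val.1 : ℝ) + (p.val.2.2.1 : ℝ)) ^ 2))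
      (2 / 5) := by
  refine hasSum_of_tendsto_sum_range_sum (f := atNode summand) (fun p => summand_nonneg _ _ _ _)
    eq_of_mem_level exists_mem_level ?_
  have hroot : atNode potential root = 2 / 5 := by norm_num [atNode, potential, root]
  have hlim := tendsto_sum_level_potential.const_sub (2 / 5 : ℝ)
  rw [sub_zero] at hlim
  refine hlim.congr fun n => ?_
  rw [← hroot, ← sum_level_add_sum_range atNode_potential n, add_sub_cancel_left]
end

section
/- The series whose terms are (1/( a²·c²·(a+c)² ))·( b·d/(a·c) + b·(b+d)/( a·(a+c) ) + (b+d)·d/( (a+c)·c ) ), summed over all quadruples (a,b,c,d) of nonnegative integers with a ≥ b, c ≥ d and a·d − b·c = 1, converges and its sum equals 1/5. -/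
open Filter Topology Finset

theorem hasSum_of_tendsto_sum_of_monotone {ι : Type*} {f : ι → ℝ} (hf : 0 ≤ f)
    {s : ℕ → Finset ι} (hs : Monotone s) (hcover : ∀ i, ∃ n, i ∈ s n) {a : ℝ}
    (hlim : Tendsto (fun n ↦ ∑ i ∈ s n, f i) atTop (𝓝 a)) : HasSum f a := by
  have hs_top : Tendsto s atTop atTop := tendsto_atTop_finset_of_monotone hs hcover
  have hsum_mono : Monotone fun n ↦ ∑ i ∈ s n, f i :=
    fun m n hmn ↦ sum_le_sum_of_subset_of_nonneg (hs hmn) fun i _ _ ↦ hf i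
  have hsummable : Summable f := by
    refine summable_of_sum_le (c := a) hf fun t ↦ ?_
    obtain ⟨n, hn⟩ := (hs_top.eventually (eventually_ge_atTop t)).exists
    exact (sum_le_sum_of_subset_of_nonneg hn fun i _ _ ↦ hf i).trans
      (hsum_mono.ge_of_tendsto hlim n)
  rw [tendsto_nhds_unique hlim (hsummable.hasSum.comp hs_top)]
  exact hsummable.hasSum

noncomputable def wordsOfLength (n : ℕ) : Finset (List Bool) :=
  (List.finite_length_eq Bool n).toFinset

noncomputable def wordsOfLengthLT (n : ℕ) : Finset (List Bool) :=
  (List.finite_length_lt Bool n).toFinset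

@[simp] lemma mem_wordsOfLength {n : ℕ} {w : List Bool} :
    w ∈ wordsOfLength n ↔ w.length = n := by
  simp [wordsOfLength]

@[simp] lemma mem_wordsOfLengthLT {n : ℕ} {w : List Bool} :
    w ∈ wordsOfLengthLT n ↔ w.length < n := by
  simp [wordsOfLengthLT]

lemma wordsOfLength_zero : wordsOfLength 0 = {[]} := by
  ext w; simp

lemma sum_wordsOfLength_succ {M : Type*} [AddCommMonoid M] (g : List Bool → M) (n : ℕ) :
    ∑ w ∈ wordsOfLength (n + 1), g w =
      ∑ w ∈ wordsOfLength n, (g (false :: w) + g (true :: w)) := by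
  have himage : wordsOfLength (n + 1) = (univ ×ˢ wordsOfLength n).image fun x ↦ x.1 :: x.2 := by
    ext (_ | ⟨b, w⟩) <;> simp
  rw [himage, sum_image fun x _ y _ h ↦ by simpa [Prod.ext_iff] using h, sum_product_right]
  simp [add_comm]

lemma sum_wordsOfLength_of_eq_add {M : Type*} [AddCommMonoid M] {g : List Bool → M}
    (hg : ∀ w, g w = g (false :: w) + g (true :: w)) (n : ℕ) :
    ∑ w ∈ wordsOfLength n, g w = g [] := by
  induction n with
  | zero => simp [wordsOfLength_zero]
  | succ n ih => rw [sum_wordsOfLength_succ, ← ih]; exact sum_congr rfl fun w _ ↦ (hg w).symm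

lemma sum_wordsOfLengthLT_eq_sub {G : Type*} [AddCommGroup G] {f u : List Bool → G}
    (hfu : ∀ w, f w = u w - u (false :: w) - u (true :: w)) (n : ℕ) :
    ∑ w ∈ wordsOfLengthLT n, f w = u [] - ∑ w ∈ wordsOfLength n, u w := by
  have hfiber : ∀ k ∈ range n, (wordsOfLengthLT n).filter (·.length = k) = wordsOfLength k := by
    intro k hk
    ext w
    simp only [mem_filter, mem_wordsOfLengthLT, mem_wordsOfLength, mem_range] at hk ⊢
    omega
  rw [← sum_fiberwise_of_maps_to (g := List.length) (t := range n) (fun w hw ↦ by simpa using hw),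
    sum_congr rfl fun k hk ↦ by rw [hfiber k hk]]
  simp_rw [hfu, sum_sub_distrib, sub_sub, ← sum_add_distrib, ← sum_wordsOfLength_succ]
  rw [← sum_sub_distrib, sum_range_sub' (fun k ↦ ∑ w ∈ wordsOfLength k, u w), wordsOfLength_zero,
    sum_singleton]

theorem hasSum_of_eq_sub_children {f u : List Bool → ℝ} (hf : 0 ≤ f)
    (hfu : ∀ w, f w = u w - u (false :: w) - u (true :: w))
    (hu : Tendsto (fun n ↦ ∑ w ∈ wordsOfLength n, u w) atTop (𝓝 0)) : HasSum f (u []) := by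
  refine hasSum_of_tendsto_sum_of_monotone hf (s := wordsOfLengthLT) ?_ ?_ ?_
  · intro m n hmn w
    simp only [mem_wordsOfLengthLT]
    omega
  · exact fun w ↦ ⟨w.length + 1, by simp⟩
  · simp_rw [sum_wordsOfLengthLT_eq_sub hfu]
    simpa using hu.const_sub (u [])

def sternBrocotChild : Bool → ℤ × ℤ × ℤ × ℤ → ℤ × ℤ × ℤ × ℤ
  | false, (a, b, c, d) => (a, b, a + c, b + d)
  | true, (a, b, c, d) => (a + c, b + d, c, d)

def sternBrocot (w : List Bool) : ℤ × ℤ × ℤ × ℤ := w.foldr sternBrocotChild (1, 0, 1, 1)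

lemma sternBrocot_cons (b : Bool) (w : List Bool) :
    sternBrocot (b :: w) = sternBrocotChild b (sternBrocot w) := rfl

lemma mk_mem_T_iff {a b c d : ℤ} :
    (a, b, c, d) ∈ T ↔ b ≤ a ∧ 0 ≤ b ∧ d ≤ c ∧ 0 ≤ d ∧ a * d - b * c = 1 := Iff.rfl

lemma pos_of_mem_T {p : ℤ × ℤ × ℤ × ℤ} (hp : p ∈ T) : 0 < p.1 ∧ 0 < p.2.2.1 ∧ 0 < p.2.2.2 := by
  obtain ⟨a, b, c, d⟩ := p
  obtain ⟨hba, hb, hdc, hd, hdet⟩ := mk_mem_T_iff.1 hp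
  have had : 0 < a * d := by nlinarith
  have ha : 0 < a := by nlinarith
  have hd' : 0 < d := by nlinarith
  exact ⟨ha, show 0 < c by omega, hd'⟩

lemma sternBrocotChild_mem_T {p : ℤ × ℤ × ℤ × ℤ} (b : Bool) (hp : p ∈ T) :
    sternBrocotChild b p ∈ T := by
  obtain ⟨a, b', c, d⟩ := p
  obtain ⟨hba, hb, hdc, hd, hdet⟩ := mk_mem_T_iff.1 hp
  cases b <;>
    exact mk_mem_T_iff.2 ⟨by omega, by omega, by omega, by omega, by linear_combination hdet⟩

lemma sternBrocot_mem_T (w : List Bool) : sternBrocot w ∈ T := by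
  induction w with
  | nil => exact mk_mem_T_iff.2 (by norm_num)
  | cons b w ih => exact sternBrocotChild_mem_T b ih

lemma sternBrocotChild_ne_root {p : ℤ × ℤ × ℤ × ℤ} (b : Bool) (hp : p ∈ T) :
    sternBrocotChild b p ≠ (1, 0, 1, 1) := by
  obtain ⟨a, b', c, d⟩ := p
  obtain ⟨ha, hc, -⟩ : 0 < a ∧ 0 < c ∧ 0 < d := pos_of_mem_T hp
  cases b <;> simp only [sternBrocotChild, ne_eq, Prod.mk.injEq] <;> omega

lemma sternBrocotChild_inj {p q : ℤ × ℤ × ℤ × ℤ} {b b' : Bool} (hp : p ∈ T) (hq : q ∈ T) :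
    sternBrocotChild b p = sternBrocotChild b' q ↔ b = b' ∧ p = q := by
  refine ⟨fun h ↦ ?_, by rintro ⟨rfl, rfl⟩; rfl⟩
  obtain ⟨a, b₁, c, d⟩ := p
  obtain ⟨a', b₁', c', d'⟩ := q
  obtain ⟨ha, hc, -⟩ : 0 < a ∧ 0 < c ∧ 0 < d := pos_of_mem_T hp
  obtain ⟨ha', hc', -⟩ : 0 < a' ∧ 0 < c' ∧ 0 < d' := pos_of_mem_T hq
  cases b <;> cases b' <;>
    simp only [sternBrocotChild, Prod.mk.injEq, Bool.false_eq_true, Bool.true_eq_false, true_and,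
      false_and] at h ⊢ <;> omega

lemma sternBrocot_injective : Function.Injective sternBrocot := by
  intro w₁
  induction w₁ with
  | nil =>
    rintro (_ | ⟨b, w⟩) h
    · rfl
    · exact absurd h.symm (sternBrocotChild_ne_root b (sternBrocot_mem_T w))
  | cons b w₁ ih =>
    rintro (_ | ⟨b', w₂⟩) h
    · exact absurd h (sternBrocotChild_ne_root b (sternBrocot_mem_T w₁))
    · obtain ⟨rfl, hw⟩ :=
        (sternBrocotChild_inj (sternBrocot_mem_T w₁) (sternBrocot_mem_T w₂)).1 h
      rw [ih hw]

lemma exists_sternBrocotChild_eq {a b c d : ℤ} (hp : (a, b, c, d) ∈ T)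
    (hroot : (a, b, c, d) ≠ (1, 0, 1, 1)) :
    ∃ β q, q ∈ T ∧ q.1 + q.2.2.1 < a + c ∧ sternBrocotChild β q = (a, b, c, d) := by
  obtain ⟨hba, hb, hdc, hd, hdet⟩ := mk_mem_T_iff.1 hp
  obtain ⟨ha, hc, hd'⟩ : 0 < a ∧ 0 < c ∧ 0 < d := pos_of_mem_T hp
  rcases lt_trichotomy a c with hac | rfl | hca
  · refine ⟨false, (a, b, c - a, d - b),
      mk_mem_T_iff.2 ⟨hba, hb, ?_, ?_, by linear_combination hdet⟩,
      by dsimp only; omega, by simp [sternBrocotChild]⟩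
    -- `a (d - b) = 1 + b (c - a) > 0` and `a ((c - a) - (d - b)) = (a - b)(c - a) - 1 ≥ 0`
    · nlinarith
    · nlinarith
  · have ha1 : a = 1 :=
      Int.eq_one_of_mul_eq_one_right ha.le (by linear_combination hdet : a * (d - b) = 1)
    subst ha1
    obtain rfl : d = 1 := by omega
    obtain rfl : b = 0 := by omega
    exact (hroot rfl).elim
  · refine ⟨true, (a - c, b - d, c, d),
      mk_mem_T_iff.2 ⟨?_, ?_, hdc, hd, by linear_combination hdet⟩,
      by dsimp only; omega, by simp [sternBrocotChild]⟩
    -- `c (b - d) = d (a - c) - 1 ≥ 0` and `c ((a - c) - (b - d)) = (c - d)(a - c) + 1 > 0`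
    · nlinarith
    · nlinarith

lemma exists_sternBrocot_eq {p : ℤ × ℤ × ℤ × ℤ} (hp : p ∈ T) : ∃ w, sternBrocot w = p := by
  induction h : (p.1 + p.2.2.1).toNat using Nat.strong_induction_on generalizing p with
  | _ n ih =>
    obtain ⟨a, b, c, d⟩ := p
    by_cases hroot : (a, b, c, d) = (1, 0, 1, 1)
    · exact ⟨[], hroot.symm⟩
    obtain ⟨β, q, hq, hlt, hchild⟩ := exists_sternBrocotChild_eq hp hroot
    obtain ⟨hqa, hqc, -⟩ := pos_of_mem_T hq
    obtain ⟨w, hw⟩ := ih _ (by dsimp only at h; omega) hq rfl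
    exact ⟨β :: w, by rw [sternBrocot_cons, hw, hchild]⟩

noncomputable def sternBrocotEquiv : List Bool ≃ T :=
  Equiv.ofBijective (fun w ↦ ⟨sternBrocot w, sternBrocot_mem_T w⟩)
    ⟨fun _ _ h ↦ sternBrocot_injective (congrArg Subtype.val h),
      fun p ↦ (exists_sternBrocot_eq p.2).imp fun _ hw ↦ Subtype.ext hw⟩

lemma length_add_two_le_sternBrocot (w : List Bool) :
    (w.length : ℤ) + 2 ≤ (sternBrocot w).1 + (sternBrocot w).2.2.1 := by
  induction w with
  | nil => simp [sternBrocot]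
  | cons b w ih =>
    have hmem := sternBrocot_mem_T w
    rw [sternBrocot_cons]
    generalize sternBrocot w = p at ih hmem ⊢
    obtain ⟨a, b', c, d⟩ := p
    obtain ⟨ha, hc, -⟩ : 0 < a ∧ 0 < c ∧ 0 < d := pos_of_mem_T hmem
    cases b <;> simp only [sternBrocotChild, List.length_cons] at ih ⊢ <;> push_cast <;> omega

noncomputable def summand (a b c d : ℝ) : ℝ :=
  1 / (a ^ 2 * c ^ 2 * (a + c) ^ 2) *
    (b * d / (a * c) + b * (b + d) / (a * (a + c)) + (b + d) * d / ((a + c) * c))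

noncomputable def potential (a b c d : ℝ) : ℝ := b * d / (a * c) ^ 4 + 1 / (5 * (a * c) ^ 5)

lemma summand_nonneg {a b c d : ℝ} (ha : 0 ≤ a) (hb : 0 ≤ b) (hc : 0 ≤ c) (hd : 0 ≤ d) :
    0 ≤ summand a b c d := by
  unfold summand
  positivity

lemma potential_nonneg {a b c d : ℝ} (ha : 0 ≤ a) (hb : 0 ≤ b) (hc : 0 ≤ c) (hd : 0 ≤ d) :
    0 ≤ potential a b c d := by
  unfold potential
  positivity

lemma summand_eq_potential_sub {a b c d : ℝ} (ha : a ≠ 0) (hc : c ≠ 0) (hac : a + c ≠ 0)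
    (hdet : a * d - b * c = 1) :
    summand a b c d =
      potential a b c d - potential a b (a + c) (b + d) - potential (a + c) (b + d) c d := by
  obtain rfl : d = (1 + b * c) / a := by field_simp; linarith
  unfold summand potential
  field_simp
  ring

lemma potential_le {a b c d : ℝ} (hb : 0 ≤ b) (hba : b ≤ a) (hd : 0 ≤ d) (hdc : d ≤ c)
    (hac : 1 ≤ a * c) : potential a b c d ≤ 2 / (a * c) ^ 3 := by
  have hbd : b * d ≤ a * c := mul_le_mul hba hdc hd (hb.trans hba)
  set x := a * c
  have hx : 0 < x := by linarith
  unfold potential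
  calc b * d / x ^ 4 + 1 / (5 * x ^ 5) ≤ x / x ^ 4 + 1 / x ^ 3 := by
        gcongr
        nlinarith [pow_le_pow_right₀ hac (show 3 ≤ 5 by norm_num)]
    _ = 2 / x ^ 3 := by field_simp; ring

def evalCast (g : ℝ → ℝ → ℝ → ℝ → ℝ) (p : ℤ × ℤ × ℤ × ℤ) : ℝ := g p.1 p.2.1 p.2.2.1 p.2.2.2

noncomputable def width (p : ℤ × ℤ × ℤ × ℤ) : ℝ := 1 / ((p.1 : ℝ) * p.2.2.1)

lemma evalCast_nonneg_of_mem_T {g : ℝ → ℝ → ℝ → ℝ → ℝ}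
    (hg : ∀ a b c d : ℝ, 0 ≤ a → 0 ≤ b → 0 ≤ c → 0 ≤ d → 0 ≤ g a b c d)
    {p : ℤ × ℤ × ℤ × ℤ} (hp : p ∈ T) : 0 ≤ evalCast g p := by
  obtain ⟨ha, hc, -⟩ := pos_of_mem_T hp
  obtain ⟨-, hb, -, hd, -⟩ := hp
  exact hg _ _ _ _ (by exact_mod_cast ha.le) (by exact_mod_cast hb) (by exact_mod_cast hc.le)
    (by exact_mod_cast hd)

lemma evalCast_summand_eq {p : ℤ × ℤ × ℤ × ℤ} (hp : p ∈ T) :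
    evalCast summand p = evalCast potential p - evalCast potential (sternBrocotChild false p) -
      evalCast potential (sternBrocotChild true p) := by
  obtain ⟨a, b, c, d⟩ := p
  obtain ⟨-, -, -, -, hdet⟩ := mk_mem_T_iff.1 hp
  obtain ⟨ha, hc, -⟩ : 0 < a ∧ 0 < c ∧ 0 < d := pos_of_mem_T hp
  simp only [evalCast, sternBrocotChild]
  push_cast
  exact summand_eq_potential_sub (by positivity) (by positivity) (by positivity)
    (by exact_mod_cast hdet)

lemma width_eq_add {p : ℤ × ℤ × ℤ × ℤ} (hp : p ∈ T) :
    width p = width (sternBrocotChild false p) + width (sternBrocotChild true p) := by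
  obtain ⟨a, b, c, d⟩ := p
  obtain ⟨ha, hc, -⟩ : 0 < a ∧ 0 < c ∧ 0 < d := pos_of_mem_T hp
  have ha' : (0 : ℝ) < a := by exact_mod_cast ha
  have hc' : (0 : ℝ) < c := by exact_mod_cast hc
  simp only [width, sternBrocotChild]
  push_cast
  field_simp
  ring

lemma evalCast_potential_le {p : ℤ × ℤ × ℤ × ℤ} (hp : p ∈ T) {n : ℕ}
    (hn : (n : ℤ) + 2 ≤ p.1 + p.2.2.1) : evalCast potential p ≤ 2 / (n + 1) * width p := by
  obtain ⟨a, b, c, d⟩ := p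
  obtain ⟨hba, hb, hdc, hd, -⟩ := mk_mem_T_iff.1 hp
  obtain ⟨ha, hc, -⟩ : 0 < a ∧ 0 < c ∧ 0 < d := pos_of_mem_T hp
  have hnac : ((n : ℤ) + 1 : ℝ) ≤ (a * c : ℤ) := by
    exact_mod_cast (by nlinarith : (n : ℤ) + 1 ≤ a * c)
  push_cast at hnac
  have hac : (1 : ℝ) ≤ a * c := by linarith [(n.cast_nonneg : (0 : ℝ) ≤ n)]
  calc evalCast potential (a, b, c, d) ≤ 2 / ((a : ℝ) * c) ^ 3 :=
        potential_le (by exact_mod_cast hb) (by exact_mod_cast hba) (by exact_mod_cast hd)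
          (by exact_mod_cast hdc) hac
    _ = 2 / ((a : ℝ) * c) ^ 2 * width (a, b, c, d) := by
        simp only [width]
        field_simp
    _ ≤ 2 / (n + 1) * width (a, b, c, d) := by
        have : (0 : ℝ) ≤ width (a, b, c, d) := by simp only [width]; positivity
        gcongr
        nlinarith

lemma sum_width_sternBrocot (n : ℕ) : ∑ w ∈ wordsOfLength n, width (sternBrocot w) = 1 := by
  rw [sum_wordsOfLength_of_eq_add (g := fun w ↦ width (sternBrocot w))
    fun w ↦ width_eq_add (sternBrocot_mem_T w)]
  norm_num [width, sternBrocot]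

lemma tendsto_sum_potential_sternBrocot :
    Tendsto (fun n ↦ ∑ w ∈ wordsOfLength n, evalCast potential (sternBrocot w)) atTop (𝓝 0) := by
  refine squeeze_zero
    (fun n ↦ sum_nonneg fun w _ ↦
      evalCast_nonneg_of_mem_T (fun _ _ _ _ ↦ potential_nonneg) (sternBrocot_mem_T w))
    (fun n ↦ ?_) (by simpa using (tendsto_one_div_add_atTop_nhds_zero_nat (𝕜 := ℝ)).const_mul 2)
  calc ∑ w ∈ wordsOfLength n, evalCast potential (sternBrocot w)
      ≤ ∑ w ∈ wordsOfLength n, 2 / (n + 1) * width (sternBrocot w) := by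
        refine sum_le_sum fun w hw ↦ evalCast_potential_le (sternBrocot_mem_T w) ?_
        simpa [(mem_wordsOfLength.1 hw)] using length_add_two_le_sternBrocot w
    _ = 2 * ((n : ℝ) + 1)⁻¹ := by rw [← mul_sum, sum_width_sternBrocot, mul_one, div_eq_mul_inv]

theorem hasSum_summand_sternBrocot :
    HasSum (fun w ↦ evalCast summand (sternBrocot w)) (1 / 5) := by
  have hroot : evalCast potential (sternBrocot []) = 1 / 5 := by
    norm_num [evalCast, potential, sternBrocot]
  rw [← hroot]
  exact hasSum_of_eq_sub_children (u := fun w ↦ evalCast potential (sternBrocot w))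
    (fun w ↦ evalCast_nonneg_of_mem_T (fun _ _ _ _ ↦ summand_nonneg) (sternBrocot_mem_T w))
    (fun w ↦ evalCast_summand_eq (sternBrocot_mem_T w)) tendsto_sum_potential_sternBrocot

theorem stmt_16 :
    HasSum
      (fun p : T =>
        (1 / ((p.val.1 : ℝ) ^ 2 * (p.val.2.2.1 : ℝ) ^ 2 *
            ((p.val.1 : ℝ) + (p.val.2.2.1 : ℝ)) ^ 2)) *
          ((p.val.2.1 : ℝ) * (p.val.2.2.2 : ℝ) / ((p.val.1 : ℝ) * (p.val.2.2.1 : ℝ)) +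
            (p.val.2.1 : ℝ) * ((p.val.2.1 : ℝ) + (p.val.2.2.2 : ℝ)) /
              ((p.val.1 : ℝ) * ((p.val.1 : ℝ) + (p.val.2.2.1 : ℝ))) +
            ((p.val.2.1 : ℝ) + (p.val.2.2.2 : ℝ)) * (p.val.2.2.2 : ℝ) /
              (((p.val.1 : ℝ) + (p.val.2.2.1 : ℝ)) * (p.val.2.2.1 : ℝ))))
      (1 / 5) :=
  sternBrocotEquiv.hasSum_iff.mp hasSum_summand_sternBrocot
end
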